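/- Let H ∈ (0,1), γ ∈ [0,1), and d > 0, and define f_d(s) = 1 − γ − (γ − γ²)s^{2H} + γ(1−s)^{2H} − (H/d)(1 + d − dγs)((1−γ)s^{2H−1} + (1−s)^{2H−1}). Then for every s ∈ (0,1), f_d(s) < (1 − H − H/d)((1−s)^{2H−1} + (1−γ)s^{2H−1}) − γ(1−γ)(1−H)s^{2H}. -/

import Mathlib

open Set Real

/- With `A = s^(2H-1)` and `B = (1-s)^(2H-1)`, the gap between the two sides is exactly
`(1-γ)(A + B - 1) + γ s (1-H) B`. Since `2H - 1 < 1` and `s, 1 - s ∈ (0,1)`, we have `A > s` and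
`B > 1 - s`, so the first term is positive and the second nonnegative. -/

theorem one_lt_rpow_add_one_sub_rpow {s a : ℝ} (hs : s ∈ Ioo (0 : ℝ) 1) (ha : a < 1) :
    1 < s ^ a + (1 - s) ^ a := by
  obtain ⟨hs0, hs1⟩ := hs
  have hA : s < s ^ a := by
    simpa using rpow_lt_rpow_of_exponent_gt hs0 hs1 ha
  have hB : 1 - s < (1 - s) ^ a := by
    simpa using rpow_lt_rpow_of_exponent_gt (by linarith) (by linarith) ha
  linarith

theorem rpow_eq_rpow_sub_one_mul {x : ℝ} (hx : x ≠ 0) (y : ℝ) : x ^ y = x ^ (y - 1) * x := by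
  rw [← rpow_add_one hx, sub_add_cancel]

theorem f_d_gap_eq (H γ d s A B : ℝ) (hd : d ≠ 0) :
    ((1 - H - H / d) * (B + (1 - γ) * A) - γ * (1 - γ) * (1 - H) * (A * s)) -
        (1 - γ - (γ - γ ^ 2) * (A * s) + γ * (B * (1 - s)) -
          H / d * (1 + d - d * γ * s) * ((1 - γ) * A + B)) =
      (1 - γ) * (A + B - 1) + γ * s * (1 - H) * B := by
  field_simp
  ring

/-- Upper bound for `f_d` on `(0,1)`. -/
theorem f_d_upper_bound (H γ d : ℝ) (hH : H ∈ Ioo (0 : ℝ) 1) (hγ : γ ∈ Ico (0 : ℝ) 1)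
    (hd : 0 < d) :
    ∀ s ∈ Ioo (0 : ℝ) 1,
      1 - γ - (γ - γ ^ 2) * s ^ (2 * H) + γ * (1 - s) ^ (2 * H) -
          H / d * (1 + d - d * γ * s) *
            ((1 - γ) * s ^ (2 * H - 1) + (1 - s) ^ (2 * H - 1)) <
        (1 - H - H / d) * ((1 - s) ^ (2 * H - 1) + (1 - γ) * s ^ (2 * H - 1)) -
          γ * (1 - γ) * (1 - H) * s ^ (2 * H) := by
  intro s hs
  have hsum := one_lt_rpow_add_one_sub_rpow hs (a := 2 * H - 1) (by linarith [hH.2])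
  rw [rpow_eq_rpow_sub_one_mul hs.1.ne' (2 * H),
    rpow_eq_rpow_sub_one_mul (sub_pos.2 hs.2).ne' (2 * H), ← sub_pos, f_d_gap_eq H γ d s _ _ hd.ne']
  have hB : 0 < (1 - s) ^ (2 * H - 1) := rpow_pos_of_pos (sub_pos.2 hs.2) _
  refine add_pos_of_pos_of_nonneg (mul_pos (sub_pos.2 hγ.2) (by linarith)) ?_
  exact mul_nonneg (mul_nonneg (mul_nonneg hγ.1 hs.1.le) (sub_nonneg.2 hH.2.le)) hB.le
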